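/- arXiv:math/9908014 — 7 statements merged into one kernel-verified Lean document; each statement's English description precedes it below -/
import Mathlib

section
/- Let λ > 0 and E be real numbers, and let s be a complex number with s² = (E + i)² − λ² and Im s ≥ 0. Then (1/(2π)) · ∫_0^{2π} (1/2)·log(1 + (E − λ·cos x)²) dx = log(|E + i + s| / 2). -/
/-!
With `z = e^{ix}` and `A = E + i + s` we have `A (E + i - s) = λ²`, so on the unit circle
`E + i - λ cos x = (A / 2) (1 - (λ / A) z) (1 - (λ / A) z̄)`, and `Im s ≥ 0` forces `|λ| < |A|`.
The logarithm of each of the last two factors has circle average `log⁺ |λ / A| = 0` (Jensen),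
while `(1/2) log (1 + (E - λ cos x)²) = log |E + i - λ cos x|`.
-/

open Real ComplexConjugate

theorem Complex.norm_one_sub_mul_eq_norm_sub_conj {c z : ℂ} (hz : ‖z‖ = 1) :
    ‖1 - c * z‖ = ‖z - conj c‖ := by
  have hzz : z * conj z = 1 := by simp [Complex.mul_conj', hz]
  have h : conj z - c = conj z * (1 - c * z) := by linear_combination c * hzz
  rw [← Complex.norm_conj (z - conj c), map_sub, Complex.conj_conj, h, norm_mul,
    Complex.norm_conj, hz, one_mul]

theorem Complex.mul_sub_mul_re_eq_of_norm_eq_one {A z : ℂ} (hA : A ≠ 0) (hz : ‖z‖ = 1)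
    (lam : ℝ) :
    z * ((A + lam ^ 2 / A) / 2 - lam * z.re) = A / 2 * (1 - lam / A * z) * (z - lam / A) := by
  have hzz : z * conj z = 1 := by simp [Complex.mul_conj', hz]
  rw [Complex.re_eq_add_conj]
  field_simp
  linear_combination (-(lam : ℂ) * A) * hzz

theorem circleAverage_log_norm_sub_mul_re {A : ℂ} {lam : ℝ} (h : |lam| < ‖A‖) :
    circleAverage (fun z ↦ log ‖(A + lam ^ 2 / A) / 2 - lam * z.re‖) 0 1 = log (‖A‖ / 2) := by
  have hA : A ≠ 0 := norm_pos_iff.mp ((abs_nonneg lam).trans_lt h)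
  set c : ℂ := lam / A
  have hc : ‖c‖ < 1 := by
    rwa [norm_div, Complex.norm_real, Real.norm_eq_abs, div_lt_one (norm_pos_iff.mpr hA)]
  have hc' : ‖conj c‖ < 1 := by rwa [Complex.norm_conj]
  have hsplit : Set.EqOn (fun z ↦ log ‖(A + lam ^ 2 / A) / 2 - lam * z.re‖)
      (fun z ↦ log (‖A‖ / 2) + log ‖z - conj c‖ + log ‖z - c‖) (Metric.sphere 0 |1|) := by
    intro z hz
    rw [abs_one, mem_sphere_zero_iff_norm] at hz
    have hne : ∀ a : ℂ, ‖a‖ < 1 → ‖z - a‖ ≠ 0 := fun a ha ↦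
      norm_ne_zero_iff.mpr (sub_ne_zero.mpr (by rintro rfl; linarith))
    have := congrArg norm (Complex.mul_sub_mul_re_eq_of_norm_eq_one hA hz lam)
    rw [norm_mul, hz, one_mul, norm_mul, norm_mul, norm_div, Complex.norm_two,
      Complex.norm_one_sub_mul_eq_norm_sub_conj hz] at this
    dsimp only
    have hA2 : ‖A‖ / 2 ≠ 0 := by positivity
    rw [this, log_mul (mul_ne_zero hA2 (hne _ hc')) (hne _ hc), log_mul hA2 (hne _ hc')]
  rw [circleAverage_congr_sphere hsplit, circleAverage_fun_add, circleAverage_fun_add,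
    circleAverage_const, circleAverage_log_norm_sub_const₀ hc',
    circleAverage_log_norm_sub_const₀ hc, add_zero, add_zero]
  all_goals fun_prop

section SquareRoot

variable {E lam : ℝ} {s : ℂ}

theorem re_mul_im_eq_and_re_sq_sub_im_sq_eq_of_sq_eq
    (hs : s ^ 2 = ((E : ℂ) + Complex.I) ^ 2 - (lam : ℂ) ^ 2) :
    s.re * s.im = E ∧ s.re ^ 2 - s.im ^ 2 = E ^ 2 - 1 - lam ^ 2 := by
  have him := congrArg Complex.im hs
  have hre := congrArg Complex.re hs
  simp only [sq, Complex.mul_im, Complex.mul_re, Complex.sub_im, Complex.sub_re,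
    Complex.add_im, Complex.add_re, Complex.ofReal_im, Complex.ofReal_re,
    Complex.I_re, Complex.I_im] at him hre
  constructor <;> linarith

theorem im_pos_of_sq_eq (hs : s ^ 2 = ((E : ℂ) + Complex.I) ^ 2 - (lam : ℂ) ^ 2)
    (hims : 0 ≤ s.im) : 0 < s.im := by
  obtain ⟨hri, hrr⟩ := re_mul_im_eq_and_re_sq_sub_im_sq_eq_of_sq_eq hs
  refine hims.lt_of_ne fun h0 ↦ ?_
  rw [← h0, mul_zero] at hri
  rw [← h0, ← hri] at hrr
  nlinarith [sq_nonneg s.re, sq_nonneg lam]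

theorem norm_sub_lt_norm_add_of_sq_eq (hs : s ^ 2 = ((E : ℂ) + Complex.I) ^ 2 - (lam : ℂ) ^ 2)
    (hims : 0 ≤ s.im) : ‖(E : ℂ) + Complex.I - s‖ < ‖(E : ℂ) + Complex.I + s‖ := by
  obtain ⟨hri, -⟩ := re_mul_im_eq_and_re_sq_sub_im_sq_eq_of_sq_eq hs
  have him := im_pos_of_sq_eq hs hims
  rw [← sq_lt_sq₀ (norm_nonneg _) (norm_nonneg _), Complex.sq_norm, Complex.sq_norm]
  simp only [Complex.normSq_apply, Complex.add_re, Complex.add_im, Complex.sub_re, Complex.sub_im,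
    Complex.ofReal_re, Complex.ofReal_im, Complex.I_re, Complex.I_im]
  -- `‖w + s‖² - ‖w - s‖² = 4 (E s.re + s.im) = 4 s.im (s.re² + 1)` for `w = E + i`
  subst hri
  nlinarith [mul_pos him (add_pos_of_nonneg_of_pos (sq_nonneg s.re) one_pos)]

theorem abs_lt_norm_add_of_sq_eq (hs : s ^ 2 = ((E : ℂ) + Complex.I) ^ 2 - (lam : ℂ) ^ 2)
    (hims : 0 ≤ s.im) : |lam| < ‖(E : ℂ) + Complex.I + s‖ := by
  have hprod : ‖(E : ℂ) + Complex.I + s‖ * ‖(E : ℂ) + Complex.I - s‖ = |lam| ^ 2 := by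
    have h : ((E : ℂ) + Complex.I + s) * ((E : ℂ) + Complex.I - s) = (lam : ℂ) ^ 2 := by
      linear_combination -hs
    rw [← norm_mul, h, norm_pow, Complex.norm_real, Real.norm_eq_abs]
  have hlt := norm_sub_lt_norm_add_of_sq_eq hs hims
  nlinarith [norm_nonneg ((E : ℂ) + Complex.I - s), abs_nonneg lam]

end SquareRoot

theorem averaged_log_column_norm_general (lam E : ℝ) (s : ℂ)
    (hs : s ^ 2 = ((E : ℂ) + Complex.I) ^ 2 - (lam : ℂ) ^ 2) (hims : 0 ≤ s.im) :
    (1 / (2 * π)) *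
        (∫ x in (0:ℝ)..(2 * π), (1 / 2) * Real.log (1 + (E - lam * Real.cos x) ^ 2))
      = Real.log (‖(E : ℂ) + Complex.I + s‖ / 2) := by
  set A : ℂ := (E : ℂ) + Complex.I + s
  have hlt := abs_lt_norm_add_of_sq_eq hs hims
  have hA : A ≠ 0 := norm_pos_iff.mp ((abs_nonneg lam).trans_lt hlt)
  have hmid : (A + lam ^ 2 / A) / 2 = E + Complex.I := by
    field_simp
    linear_combination hs
  have key := circleAverage_log_norm_sub_mul_re hlt
  rw [hmid, circleAverage_def, smul_eq_mul] at key
  rw [← key, one_div]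
  congr 1
  refine intervalIntegral.integral_congr fun x _ ↦ ?_
  have hpoint : (E : ℂ) + Complex.I - lam * (circleMap 0 1 x).re
      = ↑(E - lam * cos x) + ↑(1 : ℝ) * Complex.I := by
    simp only [circleMap, Complex.ofReal_one, one_mul, zero_add, Complex.exp_ofReal_mul_I_re,
      Complex.ofReal_cos, Complex.ofReal_sub, Complex.ofReal_mul]
    ring
  rw [hpoint, Complex.norm_add_mul_I, one_pow, add_comm _ (1 : ℝ), log_sqrt (by positivity)]
  ring

/-- Jensen-formula evaluation of the averaged logarithm of the column norm of the transfer
matrix: for `λ > 0`, real `E`, and `s` the square root of `(E+i)² − λ²` with nonnegative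
imaginary part,
`(1/(2π)) ∫_0^{2π} (1/2)·log(1 + (E − λ·cos x)²) dx = log(|E + i + s| / 2)`. -/
theorem averaged_log_column_norm (lam E : ℝ) (hlam : 0 < lam) (s : ℂ)
    (hs : s ^ 2 = ((E : ℂ) + Complex.I) ^ 2 - (lam : ℂ) ^ 2) (hims : 0 ≤ s.im) :
    (1 / (2 * π)) *
        (∫ x in (0:ℝ)..(2 * π), (1 / 2) * Real.log (1 + (E - lam * Real.cos x) ^ 2))
      = Real.log (‖(E : ℂ) + Complex.I + s‖ / 2) :=
  averaged_log_column_norm_general lam E s hs hims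
end

section
/- For every real c, the 2×2 real matrix A = [[c, 1], [−1, 0]], regarded as an operator on the Euclidean plane, satisfies ‖A‖ ≤ (2/√3) · √(1 + c²), where ‖A‖ is the ℓ²-operator norm. -/
/-- The operator norm of a `2×2` real matrix acting on the Euclidean plane. -/
noncomputable def euclideanOpNorm (A : Matrix (Fin 2) (Fin 2) ℝ) : ℝ :=
  ‖LinearMap.toContinuousLinearMap (Matrix.toEuclideanLin A)‖

/-- For every real `c`, the matrix `[[c, 1], [−1, 0]]` satisfies
`‖A‖ ≤ (2/√3)·√(1 + c²)` in the ℓ²-operator norm on the Euclidean plane. -/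
theorem opNorm_le_column_norm (c : ℝ) :
    euclideanOpNorm !![c, 1; -1, 0] ≤ (2 / Real.sqrt 3) * Real.sqrt (1 + c ^ 2) := by
  have hM : (0:ℝ) ≤ (2 / Real.sqrt 3) * Real.sqrt (1 + c ^ 2) := by positivity
  refine ContinuousLinearMap.opNorm_le_bound _ hM ?_
  intro v
  set a := v 0 with ha
  set b := v 1 with hb
  have h0 : (Matrix.toEuclideanLin !![c, 1; -1, 0] v) 0 = c * a + b := by
    simp [Matrix.toEuclideanLin_apply, Matrix.mulVec, dotProduct,
      Fin.sum_univ_two, ha, hb]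
  have h1 : (Matrix.toEuclideanLin !![c, 1; -1, 0] v) 1 = -a := by
    simp [Matrix.toEuclideanLin_apply, Matrix.mulVec, dotProduct,
      Fin.sum_univ_two, ha, hb]
  have hnv : ‖v‖ = Real.sqrt (a ^ 2 + b ^ 2) := by
    rw [EuclideanSpace.norm_eq, Fin.sum_univ_two]
    simp [Real.norm_eq_abs, sq_abs, ha, hb]
  have hnAv : ‖LinearMap.toContinuousLinearMap (Matrix.toEuclideanLin !![c, 1; -1, 0]) v‖
      = Real.sqrt ((c * a + b) ^ 2 + a ^ 2) := by
    rw [show (LinearMap.toContinuousLinearMap (Matrix.toEuclideanLin !![c, 1; -1, 0]) v)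
        = Matrix.toEuclideanLin !![c, 1; -1, 0] v from rfl]
    rw [EuclideanSpace.norm_eq, Fin.sum_univ_two, h0, h1]
    simp [Real.norm_eq_abs, sq_abs]
  rw [hnAv, hnv]
  have hsqrt43 : (2 / Real.sqrt 3) = Real.sqrt (4 / 3) := by
    rw [show (4:ℝ)/3 = (2 / Real.sqrt 3) ^ 2 by
      rw [div_pow, Real.sq_sqrt (by norm_num : (3:ℝ) ≥ 0)]; norm_num]
    rw [Real.sqrt_sq (by positivity)]
  rw [hsqrt43, ← Real.sqrt_mul (by norm_num), ← Real.sqrt_mul (by positivity)]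
  apply Real.sqrt_le_sqrt
  nlinarith [sq_nonneg ((1 + c^2) * a - 3 * c * b), sq_nonneg ((2*c^2 - 1) * b),
    sq_nonneg a, sq_nonneg b, sq_nonneg c]
end

section
/- For every fixed real E, the function λ ↦ (1/(2π)) · ∫_0^{2π} (1/2)·log(2 + (E + λ·cos x)²) dx − log(λ/2) is O(1/λ) as λ → +∞. -/
/-!
Writing `a = E + √2 i`, on the unit circle `u = e^{ix}` the number `a + λ cos x` is `u⁻¹ q(u)` for
the palindromic quadratic `q = (λ/2) X² + a X + λ/2`, and `‖a + λ cos x‖² = 2 + (E + λ cos x)²`.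
So the integral is the logarithmic Mahler measure of `q`, which by Jensen's formula is
`log (λ/2) + log⁺ ‖z‖ + log⁺ ‖w‖` for the roots `z, w` of `q`. Since `z w = 1` and
`z + w = -2a/λ`, only the larger root contributes, and it exceeds `1` by at most `2‖a‖/λ`.
-/

open Real Asymptotics Filter Polynomial

theorem posLog_norm_add_posLog_norm_le_norm_add {𝕜 : Type*} [NormedField 𝕜] {z w : 𝕜}
    (h : z * w = 1) : log⁺ ‖z‖ + log⁺ ‖w‖ ≤ ‖z + w‖ := by
  wlog hwz : ‖w‖ ≤ ‖z‖ generalizing z w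
  · rw [add_comm, add_comm z]
    exact this (by rwa [mul_comm]) (le_of_not_ge hwz)
  have hnorm : ‖z‖ * ‖w‖ = 1 := by rw [← norm_mul, h, norm_one]
  have hw : ‖w‖ ≤ 1 := by nlinarith [norm_nonneg w]
  have hz : 1 ≤ ‖z‖ := by nlinarith [norm_nonneg w]
  rw [(posLog_eq_zero_iff ‖w‖).2 (by rwa [abs_norm]), add_zero, posLog_eq_log (by rwa [abs_norm])]
  calc log ‖z‖ ≤ ‖z‖ - 1 := log_le_sub_one_of_pos (by linarith)
    _ ≤ ‖z‖ - ‖w‖ := by linarith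
    _ ≤ ‖z + w‖ := norm_sub_le_norm_add z w

theorem exists_add_eq_and_mul_eq {k : Type*} [Field k] [IsAlgClosed k] (s p : k) :
    ∃ z w : k, z + w = s ∧ z * w = p := by
  have hdeg : (X ^ 2 - C s * X + C p).degree = 2 := by compute_degree!
  obtain ⟨z, hz⟩ := IsAlgClosed.exists_root _ (hdeg ▸ two_ne_zero)
  refine ⟨z, s - z, by ring, ?_⟩
  simp only [IsRoot, eval_add, eval_sub, eval_pow, eval_mul, eval_C, eval_X] at hz
  linear_combination -hz

theorem logMahlerMeasure_C_mul_X_sub_C_mul_X_sub_C {c : ℂ} (hc : c ≠ 0) (z w : ℂ) :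
    (C c * (X - C z) * (X - C w)).logMahlerMeasure = log ‖c‖ + log⁺ ‖z‖ + log⁺ ‖w‖ := by
  have hzw : (X - C z) * (X - C w) ≠ 0 := mul_ne_zero (X_sub_C_ne_zero z) (X_sub_C_ne_zero w)
  rw [mul_assoc, logMahlerMeasure_C_mul hc hzw, logMahlerMeasure_mul_eq_add_logMahlerMeasure hzw,
    logMahlerMeasure_X_sub_C, logMahlerMeasure_X_sub_C, add_assoc]

theorem palindromic_quadratic_eq_C_mul_X_sub_C_mul_X_sub_C {a c z w : ℂ}
    (hsum : c * (z + w) = -a) (hprod : z * w = 1) :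
    C c * X ^ 2 + C a * X + C c = C c * (X - C z) * (X - C w) := by
  have ha : C a = -(C c * (C z + C w)) := by rw [← C_add, ← C_mul, hsum, C_neg, neg_neg]
  have hp : C z * C w = 1 := by rw [← C_mul, hprod, C_1]
  rw [ha]
  linear_combination (-C c) * hp

theorem norm_eval_circleMap_palindromic_quadratic (a c : ℂ) (θ : ℝ) :
    ‖(C c * X ^ 2 + C a * X + C c).eval (circleMap 0 1 θ)‖ = ‖a + 2 * c * Complex.cos θ‖ := by
  have hunit : Complex.exp (θ * Complex.I) * Complex.exp (-θ * Complex.I) = 1 := by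
    rw [← Complex.exp_add]; simp
  have hfac : (C c * X ^ 2 + C a * X + C c).eval (circleMap 0 1 θ)
      = Complex.exp (θ * Complex.I) * (a + 2 * c * Complex.cos θ) := by
    simp only [eval_add, eval_mul, eval_pow, eval_C, eval_X, circleMap_zero, Complex.ofReal_one,
      one_mul]
    linear_combination (-c * Complex.exp (θ * Complex.I)) * Complex.two_cos θ + (-c) * hunit
  rw [hfac, norm_mul, Complex.norm_exp_ofReal_mul_I, one_mul]

theorem intervalIntegral_log_norm_add_mul_cos {a c z w : ℂ} (hc : c ≠ 0)
    (hsum : c * (z + w) = -a) (hprod : z * w = 1) :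
    (2 * π)⁻¹ * ∫ θ in (0:ℝ)..(2 * π), log ‖a + 2 * c * Complex.cos θ‖
      = log ‖c‖ + log⁺ ‖z‖ + log⁺ ‖w‖ := by
  rw [← logMahlerMeasure_C_mul_X_sub_C_mul_X_sub_C hc,
    ← palindromic_quadratic_eq_C_mul_X_sub_C_mul_X_sub_C hsum hprod, logMahlerMeasure_def,
    circleAverage_def, smul_eq_mul]
  simp only [norm_eval_circleMap_palindromic_quadratic]

theorem log_norm_add_sqrt_two_mul_I (x : ℝ) :
    log ‖(x : ℂ) + √2 * Complex.I‖ = 1 / 2 * log (2 + x ^ 2) := by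
  rw [Complex.norm_add_mul_I, log_sqrt (by positivity), sq_sqrt zero_le_two, add_comm]
  ring

theorem intervalIntegral_half_log_two_add_sq_eq {E lam : ℝ} (hlam : 0 < lam) {z w : ℂ}
    (hsum : (lam / 2 : ℂ) * (z + w) = -(E + √2 * Complex.I)) (hprod : z * w = 1) :
    (1 / (2 * π)) * ∫ x in (0:ℝ)..(2 * π), (1 / 2) * log (2 + (E + lam * cos x) ^ 2)
      = log (lam / 2) + log⁺ ‖z‖ + log⁺ ‖w‖ := by
  have hc : (lam / 2 : ℂ) ≠ 0 := by exact_mod_cast (half_pos hlam).ne'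
  have hnorm : ‖(lam / 2 : ℂ)‖ = lam / 2 := by
    rw [← Complex.ofReal_ofNat, ← Complex.ofReal_div, Complex.norm_real,
      norm_of_nonneg (half_pos hlam).le]
  have hintegrand (x : ℝ) : log ‖(E + √2 * Complex.I) + 2 * (lam / 2 : ℂ) * Complex.cos x‖
      = 1 / 2 * log (2 + (E + lam * cos x) ^ 2) := by
    rw [← log_norm_add_sqrt_two_mul_I]
    push_cast
    ring_nf
  rw [one_div, ← hnorm, ← intervalIntegral_log_norm_add_mul_cos hc hsum hprod]
  simp only [hintegrand]

/-- For every fixed real `E`, the Hadamard upper bound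
`(1/(2π)) ∫_0^{2π} (1/2)·log(2 + (E + λ·cos x)²) dx` exceeds `log(λ/2)` by a term of
order `O(1/λ)` as `λ → +∞`. -/
theorem hadamard_bound_excess_isBigO (E : ℝ) :
    (fun lam : ℝ =>
        ((1 / (2 * π)) *
            (∫ x in (0:ℝ)..(2 * π), (1 / 2) * Real.log (2 + (E + lam * Real.cos x) ^ 2)))
          - Real.log (lam / 2))
      =O[atTop] fun lam : ℝ => 1 / lam := by
  set a : ℂ := E + √2 * Complex.I
  refine IsBigO.of_bound (2 * ‖a‖) ?_
  filter_upwards [eventually_gt_atTop 0] with lam hlam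
  have hc : (lam / 2 : ℂ) ≠ 0 := by exact_mod_cast (half_pos hlam).ne'
  obtain ⟨z, w, hsum, hprod⟩ := exists_add_eq_and_mul_eq (-a / (lam / 2)) 1
  have hzw : ‖z + w‖ = 2 * ‖a‖ / lam := by
    rw [hsum, norm_div, norm_neg, ← Complex.ofReal_ofNat, ← Complex.ofReal_div, Complex.norm_real,
      norm_of_nonneg (half_pos hlam).le]
    field_simp
  rw [intervalIntegral_half_log_two_add_sq_eq hlam (by rw [hsum, mul_div_cancel₀ _ hc]) hprod,
    add_assoc, add_sub_cancel_left, norm_of_nonneg (add_nonneg posLog_nonneg posLog_nonneg),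
    norm_of_nonneg (by positivity)]
  calc log⁺ ‖z‖ + log⁺ ‖w‖ ≤ ‖z + w‖ := posLog_norm_add_posLog_norm_le_norm_add hprod
    _ = 2 * ‖a‖ * (1 / lam) := by rw [hzw]; ring
end

section
/- For every fixed real E, the function λ ↦ (1/(4π)) · ∫_0^{2π} log(1 + (E − λ·cos x)²) dx − log(λ/2) is O(1/λ) as λ → +∞. -/
/-!
On the unit circle `t = e^{ix}` one has `λ cos x - (E + i) = t⁻¹ ((λ/2) t² - (E + i) t + λ/2)`,
and `|λ cos x - (E + i)|² = 1 + (E - λ cos x)²`. The integral is therefore `4π` times the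
logarithmic Mahler measure of `(λ/2) (t - u) (t - v)`, where `u + v = 2 (E + i)/λ` and `u v = 1`.
By Jensen's formula this Mahler measure is `log (λ/2) + log (max 1 |u| · max 1 |v|)`, and since
`|u v| = 1` the larger root has modulus at most `1 + |u + v| = 1 + 2 |E + i|/λ`.
-/

open Real Asymptotics Filter

theorem max_one_norm_mul_max_one_norm_le {E : Type*} [SeminormedAddCommGroup E] {u v : E}
    (h : ‖u‖ * ‖v‖ ≤ 1) : max 1 ‖u‖ * max 1 ‖v‖ ≤ 1 + ‖u + v‖ := by
  have hu : ‖u‖ ≤ ‖u + v‖ + ‖v‖ := norm_le_add_norm_add u v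
  have hv : ‖v‖ ≤ ‖u + v‖ + ‖u‖ := norm_le_add_norm_add' u v
  rcases le_total ‖u‖ 1 with hu1 | hu1 <;> rcases le_total ‖v‖ 1 with hv1 | hv1
  · simp [hu1, hv1]
  · rw [max_eq_left hu1, max_eq_right hv1]; linarith
  · rw [max_eq_right hu1, max_eq_left hv1]; linarith
  · rw [max_eq_right hu1, max_eq_right hv1]
    nlinarith [norm_nonneg (u + v)]

theorem abs_log_max_one_norm_mul_max_one_norm_le {E : Type*} [SeminormedAddCommGroup E]
    {u v : E} (h : ‖u‖ * ‖v‖ ≤ 1) : |log (max 1 ‖u‖ * max 1 ‖v‖)| ≤ ‖u + v‖ := by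
  have hm : 1 ≤ max 1 ‖u‖ * max 1 ‖v‖ :=
    one_le_mul_of_one_le_of_one_le (le_max_left _ _) (le_max_left _ _)
  rw [abs_of_nonneg (log_nonneg hm)]
  linarith [log_le_sub_one_of_pos (by linarith : 0 < max 1 ‖u‖ * max 1 ‖v‖),
    max_one_norm_mul_max_one_norm_le h]

theorem Complex.exists_add_eq_and_mul_eq (s p : ℂ) : ∃ u v : ℂ, u + v = s ∧ u * v = p := by
  obtain ⟨w, hw⟩ := IsAlgClosed.exists_eq_mul_self (s ^ 2 / 4 - p)
  exact ⟨s / 2 + w, s / 2 - w, by ring, by linear_combination hw⟩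

open Polynomial in
theorem circleAverage_log_norm_mul_sub_mul_sub (a u v : ℂ) :
    circleAverage (fun t ↦ log ‖a * (t - u) * (t - v)‖) 0 1
      = log (‖a‖ * (max 1 ‖u‖ * max 1 ‖v‖)) := by
  have h := logMahlerMeasure_def (C a * (X - C u) * (X - C v))
  simp only [eval_mul, eval_C, eval_sub, eval_X] at h
  rw [← h, logMahlerMeasure_eq_log_MahlerMeasure, mahlerMeasure_mul, mahlerMeasure_mul,
    mahlerMeasure_const, mahlerMeasure_X_sub_C, mahlerMeasure_X_sub_C, mul_assoc]

namespace Complex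

theorem norm_quadratic_circleMap (lam E θ : ℝ) :
    ‖(lam / 2 : ℂ) * (circleMap 0 1 θ ^ 2 + 1) - (E + I) * circleMap 0 1 θ‖
      = √(1 + (E - lam * Real.cos θ) ^ 2) := by
  have hfactor : (lam / 2 : ℂ) * (exp (θ * I) ^ 2 + 1) - (E + I) * exp (θ * I)
      = exp (θ * I) * ((lam * Real.cos θ - E : ℝ) - I) := by
    have : exp (θ * I) * exp (-θ * I) = 1 := by rw [← exp_add]; simp
    push_cast
    rw [Complex.cos]
    linear_combination (-(lam / 2) : ℂ) * this
  rw [circleMap_zero, ofReal_one, one_mul, hfactor, norm_mul, norm_exp_ofReal_mul_I, one_mul,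
    norm_def, normSq_apply]
  simp only [sub_re, sub_im, ofReal_re, ofReal_im, I_re, I_im]
  ring_nf

theorem integral_log_one_add_sq_eq_circleAverage (lam E : ℝ) :
    1 / (4 * π) * ∫ x in (0:ℝ)..2 * π, Real.log (1 + (E - lam * Real.cos x) ^ 2)
      = circleAverage (fun t ↦ Real.log ‖(lam / 2 : ℂ) * (t ^ 2 + 1) - (E + I) * t‖) 0 1 := by
  have hlog (θ : ℝ) : Real.log √(1 + (E - lam * Real.cos θ) ^ 2)
      = Real.log (1 + (E - lam * Real.cos θ) ^ 2) / 2 := Real.log_sqrt (by positivity)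
  simp_rw [circleAverage_def, norm_quadratic_circleMap, hlog, intervalIntegral.integral_div,
    smul_eq_mul]
  field_simp
  ring

theorem averaged_log_sub_log_half_eq {lam : ℝ} (hlam : 0 < lam) (E : ℝ) {u v : ℂ}
    (hsum : u + v = 2 * (E + I) / lam) (hprod : u * v = 1) :
    1 / (4 * π) * (∫ x in (0:ℝ)..2 * π, Real.log (1 + (E - lam * Real.cos x) ^ 2))
        - Real.log (lam / 2) = Real.log (max 1 ‖u‖ * max 1 ‖v‖) := by
  have hfactor (t : ℂ) :
      (lam / 2 : ℂ) * (t ^ 2 + 1) - (E + I) * t = lam / 2 * (t - u) * (t - v) := by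
    have : (lam : ℂ) ≠ 0 := by exact_mod_cast hlam.ne'
    field_simp at hsum
    linear_combination t / 2 * hsum - (lam / 2 : ℂ) * hprod
  have hnorm : ‖(lam / 2 : ℂ)‖ = lam / 2 := by
    rw [norm_div, norm_real, Complex.norm_ofNat, Real.norm_of_nonneg hlam.le]
  rw [integral_log_one_add_sq_eq_circleAverage]
  simp_rw [hfactor]
  rw [circleAverage_log_norm_mul_sub_mul_sub, hnorm,
    Real.log_mul (by positivity) (by positivity)]
  ring

end Complex

/-- For every fixed real `E`, the averaged logarithm of the column norm of the transfer
matrix, `(1/(4π)) ∫_0^{2π} log(1 + (E − λ·cos x)²) dx`, exceeds `log(λ/2)` by a term of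
order `O(1/λ)` as `λ → +∞`. -/
theorem averaged_log_column_norm_excess_isBigO (E : ℝ) :
    (fun lam : ℝ =>
        ((1 / (4 * π)) *
            (∫ x in (0:ℝ)..(2 * π), Real.log (1 + (E - lam * Real.cos x) ^ 2)))
          - Real.log (lam / 2))
      =O[atTop] fun lam : ℝ => 1 / lam := by
  refine IsBigO.of_bound (2 * ‖(E + Complex.I : ℂ)‖) ?_
  filter_upwards [eventually_gt_atTop 0] with lam hlam
  obtain ⟨u, v, hsum, hprod⟩ := Complex.exists_add_eq_and_mul_eq (2 * (E + Complex.I) / lam) 1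
  have huv : ‖u‖ * ‖v‖ ≤ 1 := by rw [← norm_mul, hprod, norm_one]
  calc ‖_‖ = |log (max 1 ‖u‖ * max 1 ‖v‖)| := by
        rw [Complex.averaged_log_sub_log_half_eq hlam E hsum hprod, Real.norm_eq_abs]
    _ ≤ ‖u + v‖ := abs_log_max_one_norm_mul_max_one_norm_le huv
    _ = 2 * ‖(E + Complex.I : ℂ)‖ * ‖1 / lam‖ := by
        rw [hsum, norm_div, norm_mul, Complex.norm_ofNat, Complex.norm_real,
          Real.norm_of_nonneg hlam.le, Real.norm_of_nonneg (one_div_nonneg.2 hlam.le),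
          mul_one_div]
end

section
/- Jensen formula in an annulus with zeros: let 0 < r < R, let h be a complex-valued function analytic on an open set containing the closed annulus { z : r ≤ |z| ≤ R } and nonvanishing on that closed annulus, let a_1, …, a_m be complex numbers with r < |a_j| < R for each j, and set g(z) = (∏_{j=1}^m (z − a_j)) · h(z). With the normalization Arg_{γ_t}(h) := (1/(2π)) · Re( ∫_0^{2π} (h'(t·e^{iθ}) / h(t·e^{iθ})) · t·e^{iθ} dθ ), one has (1/(2π)) ∫_0^{2π} log|g(R·e^{iθ})| dθ − (1/(2π)) ∫_0^{2π} log|g(r·e^{iθ})| dθ = ∫_r^R (1/t) · Arg_{γ_t}(h) dt + Σ_{j=1}^m log(R/|a_j|). -/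
open Real Complex intervalIntegral MeasureTheory Metric Set


lemma jfa_slit {w z : ℂ} (hw : ‖w‖ < 1) (hz : ‖z‖ ≤ 1) :
    (1 - w * z) ∈ Complex.slitPlane := by
  left
  have h1 : ‖w * z‖ < 1 := by
    rw [norm_mul]
    calc ‖w‖ * ‖z‖ ≤ ‖w‖ * 1 :=
          mul_le_mul_of_nonneg_left hz (norm_nonneg w)
      _ < 1 := by simpa using hw
  have h2 : (w * z).re < 1 := lt_of_le_of_lt (Complex.re_le_norm _) h1
  simp only [Complex.sub_re, Complex.one_re]
  linarith

lemma jfa_meanvalue (w : ℂ) (hw : ‖w‖ < 1) :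
    ∫ θ in (0:ℝ)..(2*π), Real.log (‖1 - w * Complex.exp ((θ:ℂ) * Complex.I)‖) = 0 := by
  set f : ℂ → ℂ := fun z => Complex.log (1 - w * z) with hf
  have hdiff : ∀ z ∈ closedBall (0:ℂ) 1, DifferentiableAt ℂ f z := by
    intro z hz
    have hz1 : ‖z‖ ≤ 1 := by simpa [Complex.dist_eq] using hz
    exact DifferentiableAt.clog ((differentiableAt_const 1).sub
      ((differentiableAt_id).const_mul w)) (jfa_slit hw hz1)
  have hcauchy : (∮ z in C(0, 1), (z - 0)⁻¹ • f z) = (2 * π * Complex.I : ℂ) • f 0 :=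
    DifferentiableOn.circleIntegral_sub_inv_smul
      (fun z hz => (hdiff z hz).differentiableWithinAt) (mem_ball_self one_pos)
  have hf0 : f 0 = 0 := by simp [hf]
  rw [hf0, smul_zero] at hcauchy
  -- unfold the circle integral
  rw [circleIntegral] at hcauchy
  simp only [sub_zero, deriv_circleMap, circleMap, Complex.ofReal_one, zero_add, one_mul,
    smul_eq_mul] at hcauchy
  have hexp : ∀ θ : ℝ, Complex.exp ((θ:ℂ) * Complex.I) ≠ 0 := fun θ => Complex.exp_ne_zero _
  have hcauchy2 : ∫ θ in (0:ℝ)..(2*π), Complex.I * f (Complex.exp ((θ:ℝ) * Complex.I)) = 0 := by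
    rw [← hcauchy]
    apply intervalIntegral.integral_congr
    intro θ _
    field_simp
  rw [intervalIntegral.integral_const_mul] at hcauchy2
  have hcauchy3 : ∫ θ in (0:ℝ)..(2*π), f (Complex.exp ((θ:ℝ) * Complex.I)) = 0 := by
    rcases mul_eq_zero.1 hcauchy2 with h | h
    · exact absurd h Complex.I_ne_zero
    · exact h
  -- take real parts
  have hcont : Continuous fun θ : ℝ => f (Complex.exp ((θ:ℝ) * Complex.I)) := by
    have hfc : ContinuousOn f (closedBall (0:ℂ) 1) :=
      fun z hz => (hdiff z hz).continuousAt.continuousWithinAt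
    have hc2 : Continuous fun θ : ℝ => Complex.exp ((θ:ℂ) * Complex.I) :=
      (Complex.continuous_ofReal.mul continuous_const).cexp
    exact hfc.comp_continuous hc2 fun θ => by
      simp [Complex.dist_eq, Complex.norm_exp_ofReal_mul_I]
  have hinteg : IntervalIntegrable (fun θ : ℝ => f (Complex.exp ((θ:ℝ) * Complex.I)))
      MeasureTheory.volume 0 (2*π) := hcont.intervalIntegrable _ _
  have := Complex.reCLM.intervalIntegral_comp_comm hinteg
  have hre : ∫ θ in (0:ℝ)..(2*π), (f (Complex.exp ((θ:ℝ) * Complex.I))).re = 0 := by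
    rw [show (fun θ : ℝ => (f (Complex.exp ((θ:ℝ) * Complex.I))).re)
      = fun θ : ℝ => Complex.reCLM (f (Complex.exp ((θ:ℝ) * Complex.I))) from rfl, this,
      hcauchy3]
    simp
  refine Eq.trans ?_ hre
  apply intervalIntegral.integral_congr
  intro θ _
  have hne : (1 - w * Complex.exp ((θ:ℂ) * Complex.I)) ≠ 0 := by
    have := jfa_slit hw (le_of_eq (Complex.norm_exp_ofReal_mul_I θ))
    exact Complex.slitPlane_ne_zero this
  simp [hf, Complex.log_re]


lemma jfa_cont_log_abs {f : ℝ → ℂ} (hf : Continuous f) (hne : ∀ x, f x ≠ 0) :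
    Continuous fun x => Real.log (‖f x‖) := by
  rw [continuous_iff_continuousAt]
  intro x
  exact (Real.continuousAt_log (by simpa using hne x)).comp
    ((continuous_norm.comp hf).continuousAt)


lemma jfa_circle_log (t : ℝ) (ht : 0 < t) (a : ℂ) (hne : ‖a‖ ≠ t) :
    ∫ θ in (0:ℝ)..(2*π), Real.log (‖(t:ℂ) * Complex.exp ((θ:ℂ) * Complex.I) - a‖)
      = 2 * π * Real.log (max t (‖a‖)) := by
  have htne : (t:ℂ) ≠ 0 := Complex.ofReal_ne_zero.2 ht.ne'
  rcases lt_or_gt_of_ne hne with hlt | hgt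
  · -- |a| < t : factor  t e - a = (t e) (1 - (a/t) e⁻¹), conj trick
    set w : ℂ := (starRingEnd ℂ) a / t with hwdef
    have hwabs : ‖w‖ < 1 := by
      rw [hwdef, norm_div, Complex.norm_conj, Complex.norm_real, Real.norm_eq_abs, abs_of_pos ht, div_lt_one ht]
      exact hlt
    have key : ∀ θ : ℝ, Real.log (‖(t:ℂ) * Complex.exp ((θ:ℂ) * Complex.I) - a‖)
        = Real.log t + Real.log (‖1 - w * Complex.exp ((θ:ℂ) * Complex.I)‖) := by
      intro θ
      set e := Complex.exp ((θ:ℂ) * Complex.I) with hedef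
      have habs_e : ‖e‖ = 1 := Complex.norm_exp_ofReal_mul_I θ
      have hene : e ≠ 0 := Complex.exp_ne_zero _
      have hce : (starRingEnd ℂ) e = e⁻¹ := by
        rw [hedef, ← Complex.exp_conj, ← Complex.exp_neg]
        congr 1
        simp [map_mul, Complex.conj_ofReal, Complex.conj_I]
      have hconj : (starRingEnd ℂ) (1 - (a/t) * e⁻¹) = 1 - w * e := by
        rw [map_sub, map_one, map_mul, map_div₀, Complex.conj_ofReal, map_inv₀, hce, inv_inv]
      have hfac : (t:ℂ) * e - a = ((t:ℂ) * e) * (1 - (a/t) * e⁻¹) := by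
        field_simp
      rw [hfac, norm_mul, norm_mul, habs_e, Complex.norm_real, Real.norm_eq_abs, abs_of_pos ht, mul_one,
        ← Complex.norm_conj (1 - (a/t) * e⁻¹), hconj]
      have h2 : (1 : ℂ) - w * e ≠ 0 := by
        intro hz
        have h1 : ‖w * e‖ = 1 := by
          have h0 : w * e = 1 := by linear_combination -hz
          rw [h0]; simp
        rw [norm_mul, habs_e, mul_one] at h1
        exact hwabs.ne h1
      rw [Real.log_mul ht.ne' (norm_ne_zero_iff.mpr h2)]
    rw [intervalIntegral.integral_congr (fun θ _ => key θ)]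
    have hcont : Continuous fun θ : ℝ =>
        Real.log (‖1 - w * Complex.exp ((θ:ℂ) * Complex.I)‖) := by
      apply jfa_cont_log_abs
      · exact continuous_const.sub (continuous_const.mul
          ((Complex.continuous_ofReal.mul continuous_const).cexp))
      · intro θ
        intro hz
        have : ‖w * Complex.exp ((θ:ℂ) * Complex.I)‖ = 1 := by
          have h1 : w * Complex.exp ((θ:ℂ) * Complex.I) = 1 := by linear_combination -hz
          rw [h1]; simp
        rw [norm_mul, Complex.norm_exp_ofReal_mul_I, mul_one] at this
        exact hwabs.ne this
    rw [intervalIntegral.integral_add (intervalIntegrable_const) (hcont.intervalIntegrable _ _),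
      jfa_meanvalue w hwabs, intervalIntegral.integral_const, max_eq_left hlt.le]
    simp [smul_eq_mul]
  · -- t < |a|
    have hane : a ≠ 0 := by
      intro h0; rw [h0] at hgt; simp at hgt; linarith
    set w : ℂ := (t:ℂ) / a with hwdef
    have hwabs : ‖w‖ < 1 := by
      rw [hwdef, norm_div, Complex.norm_real, Real.norm_eq_abs, abs_of_pos ht, div_lt_one]
      · exact hgt
      · exact lt_trans ht hgt
    have key : ∀ θ : ℝ, Real.log (‖(t:ℂ) * Complex.exp ((θ:ℂ) * Complex.I) - a‖)
        = Real.log (‖a‖)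
          + Real.log (‖1 - w * Complex.exp ((θ:ℂ) * Complex.I)‖) := by
      intro θ
      set e := Complex.exp ((θ:ℂ) * Complex.I) with hedef
      have h3 : a * w = t := by rw [hwdef]; field_simp
      have hfac : (t:ℂ) * e - a = (-a) * (1 - w * e) := by
        calc (t:ℂ) * e - a = a * w * e - a := by rw [h3]
          _ = (-a) * (1 - w * e) := by ring
      rw [hfac, norm_mul, norm_neg]
      have h2 : (1 : ℂ) - w * e ≠ 0 := by
        intro hz
        have h1 : ‖w * e‖ = 1 := by
          have h0 : w * e = 1 := by linear_combination -hz
          rw [h0]; simp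
        rw [norm_mul, hedef, Complex.norm_exp_ofReal_mul_I, mul_one] at h1
        exact hwabs.ne h1
      rw [Real.log_mul (by simpa using hane) (norm_ne_zero_iff.mpr h2)]
    rw [intervalIntegral.integral_congr (fun θ _ => key θ)]
    have hcont : Continuous fun θ : ℝ =>
        Real.log (‖1 - w * Complex.exp ((θ:ℂ) * Complex.I)‖) := by
      apply jfa_cont_log_abs
      · exact continuous_const.sub (continuous_const.mul
          ((Complex.continuous_ofReal.mul continuous_const).cexp))
      · intro θ hz
        have : ‖w * Complex.exp ((θ:ℂ) * Complex.I)‖ = 1 := by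
          have h1 : w * Complex.exp ((θ:ℂ) * Complex.I) = 1 := by linear_combination -hz
          rw [h1]; simp
        rw [norm_mul, Complex.norm_exp_ofReal_mul_I, mul_one] at this
        exact hwabs.ne this
    rw [intervalIntegral.integral_add (intervalIntegrable_const) (hcont.intervalIntegrable _ _),
      jfa_meanvalue w hwabs, intervalIntegral.integral_const, max_eq_right hgt.le]
    simp [smul_eq_mul]


lemma jfa_hasDerivAt_log_abs {f : ℝ → ℂ} {f' : ℂ} {t : ℝ}
    (hf : HasDerivAt f f' t) (hne : f t ≠ 0) :
    HasDerivAt (fun s => Real.log (‖f s‖)) ((f' / f t).re) t := by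
  have hre : HasDerivAt (fun s => (f s).re) f'.re t :=
    (Complex.reCLM.hasFDerivAt.comp_hasDerivAt t hf)
  have him : HasDerivAt (fun s => (f s).im) f'.im t :=
    (Complex.imCLM.hasFDerivAt.comp_hasDerivAt t hf)
  have hN : HasDerivAt (fun s => (f s).re^2 + (f s).im^2)
      (2*(f t).re*f'.re + 2*(f t).im*f'.im) t := by
    have h1 := (hre.fun_pow 2).fun_add (him.fun_pow 2)
    simpa [mul_comm, mul_assoc, mul_left_comm] using h1
  have hNpos : 0 < (f t).re^2 + (f t).im^2 := by
    have := Complex.normSq_pos.mpr hne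
    simpa [Complex.normSq_apply, sq] using this
  have hlog := (Real.hasDerivAt_log hNpos.ne').comp t hN
  have heq : (fun s => Real.log (‖f s‖))
      = fun s => (1/2) * Real.log ((f s).re^2 + (f s).im^2) := by
    funext s
    rw [Complex.norm_def, Real.log_sqrt (Complex.normSq_nonneg _), Complex.normSq_apply]
    ring_nf
  rw [heq]
  have := hlog.const_mul (1/2 : ℝ)
  refine this.congr_deriv ?_
  rw [Complex.div_re, Complex.normSq_apply]
  have h2 : (f t).re * (f t).re + (f t).im * (f t).im ≠ 0 := by
    simpa [sq] using hNpos.ne'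
  field_simp

/-- Jensen formula in an annulus with zeros: let `0 < r < R`, let `h` be analytic on an open
set containing the closed annulus `{ r ≤ |z| ≤ R }` and nonvanishing there, let
`a_1, …, a_m` lie strictly inside the annulus, and `g(z) = (∏_j (z − a_j))·h(z)`. Then
`(1/(2π)) ∫_0^{2π} log|g(R e^{iθ})| dθ − (1/(2π)) ∫_0^{2π} log|g(r e^{iθ})| dθ`
`= ∫_r^R (1/t)·Arg_{γ_t}(h) dt + Σ_j log(R/|a_j|)`, where
`Arg_{γ_t}(h) = (1/(2π))·Re ∫_0^{2π} (h'/h)(t e^{iθ})·t e^{iθ} dθ`. -/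
theorem jensen_formula_in_annulus_with_zeros (r R : ℝ) (hr : 0 < r) (hrR : r < R)
    (m : ℕ) (a : Fin m → ℂ)
    (ha : ∀ j, r < ‖a j‖ ∧ ‖a j‖ < R)
    (h : ℂ → ℂ) (U : Set ℂ) (hU : IsOpen U)
    (hAnnU : {z : ℂ | r ≤ ‖z‖ ∧ ‖z‖ ≤ R} ⊆ U)
    (hh : AnalyticOnNhd ℂ h U)
    (hne : ∀ z : ℂ, r ≤ ‖z‖ → ‖z‖ ≤ R → h z ≠ 0)
    (g : ℂ → ℂ) (hgdef : ∀ z : ℂ, g z = (∏ j, (z - a j)) * h z) :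
    (1 / (2 * π)) *
          (∫ θ in (0:ℝ)..(2 * π),
            Real.log (‖g ((R : ℂ) * Complex.exp ((θ : ℂ) * Complex.I))‖))
        - (1 / (2 * π)) *
          (∫ θ in (0:ℝ)..(2 * π),
            Real.log (‖g ((r : ℂ) * Complex.exp ((θ : ℂ) * Complex.I))‖))
      = (∫ t in r..R, (1 / t) *
            ((1 / (2 * π)) *
              (∫ θ in (0:ℝ)..(2 * π),
                (deriv h ((t : ℂ) * Complex.exp ((θ : ℂ) * Complex.I)) /
                    h ((t : ℂ) * Complex.exp ((θ : ℂ) * Complex.I))) *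
                  ((t : ℂ) * Complex.exp ((θ : ℂ) * Complex.I))).re))
          + ∑ j, Real.log (R / ‖a j‖) := by
  have hπ : (0:ℝ) < π := Real.pi_pos
  have h2π : (0:ℝ) < 2*π := by linarith
  have hRpos : 0 < R := lt_trans hr hrR
  have hcexp : Continuous fun θ : ℝ => Complex.exp ((θ:ℂ) * Complex.I) :=
    (Complex.continuous_ofReal.mul continuous_const).cexp
  have habs_z : ∀ t : ℝ, 0 ≤ t → ∀ θ : ℝ,
      ‖(t:ℂ) * Complex.exp ((θ:ℂ) * Complex.I)‖ = t := by
    intro t ht θ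
    rw [norm_mul, Complex.norm_exp_ofReal_mul_I, Complex.norm_real, Real.norm_eq_abs, _root_.abs_of_nonneg ht, mul_one]
  have hmem : ∀ t : ℝ, r ≤ t → t ≤ R → ∀ θ : ℝ,
      ((t:ℂ) * Complex.exp ((θ:ℂ) * Complex.I)) ∈ U := by
    intro t h1 h2 θ
    apply hAnnU
    constructor <;> rw [habs_z t (le_trans hr.le h1) θ] <;> assumption
  have hnez : ∀ t : ℝ, r ≤ t → t ≤ R → ∀ θ : ℝ,
      h ((t:ℂ) * Complex.exp ((θ:ℂ) * Complex.I)) ≠ 0 := by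
    intro t h1 h2 θ
    exact hne _ (by rw [habs_z t (le_trans hr.le h1) θ]; exact h1)
      (by rw [habs_z t (le_trans hr.le h1) θ]; exact h2)
  have hconth : ContinuousOn h U := hh.continuousOn
  have hcontd : ContinuousOn (deriv h) U := hh.deriv.continuousOn
  have hhc : ∀ c : ℝ, r ≤ c → c ≤ R →
      Continuous fun θ : ℝ => h ((c:ℂ) * Complex.exp ((θ:ℂ) * Complex.I)) := by
    intro c h1 h2
    exact hconth.comp_continuous (continuous_const.mul hcexp) (fun θ => hmem c h1 h2 θ)
  have hlogh_cont : ∀ c : ℝ, r ≤ c → c ≤ R →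
      Continuous fun θ : ℝ => Real.log (‖h ((c:ℂ) * Complex.exp ((θ:ℂ) * Complex.I))‖) :=
    fun c h1 h2 => jfa_cont_log_abs (hhc c h1 h2) (fun θ => hnez c h1 h2 θ)
  have hintH : ∀ c : ℝ, r ≤ c → c ≤ R → IntervalIntegrable
      (fun θ : ℝ => Real.log (‖h ((c:ℂ) * Complex.exp ((θ:ℂ) * Complex.I))‖))
      volume 0 (2*π) :=
    fun c h1 h2 => (hlogh_cont c h1 h2).intervalIntegrable _ _
  -- splitting of log |g| on a circle of radius c
  have split : ∀ c : ℝ, r ≤ c → c ≤ R → (∀ j, ‖a j‖ ≠ c) →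
      (∫ θ in (0:ℝ)..(2*π), Real.log (‖g ((c:ℂ) * Complex.exp ((θ:ℂ) * Complex.I))‖))
      = (∑ j, 2 * π * Real.log (max c (‖a j‖)))
        + ∫ θ in (0:ℝ)..(2*π),
            Real.log (‖h ((c:ℂ) * Complex.exp ((θ:ℂ) * Complex.I))‖) := by
    intro c h1 h2 hca
    have hcpos : 0 < c := lt_of_lt_of_le hr h1
    have hfacne : ∀ (θ : ℝ) j, (c:ℂ) * Complex.exp ((θ:ℂ) * Complex.I) - a j ≠ 0 := by
      intro θ j hz
      apply hca j
      have : a j = (c:ℂ) * Complex.exp ((θ:ℂ) * Complex.I) := by linear_combination -hz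
      rw [this, habs_z c hcpos.le θ]
    have hconta : ∀ j, Continuous fun θ : ℝ =>
        Real.log (‖(c:ℂ) * Complex.exp ((θ:ℂ) * Complex.I) - a j‖) := by
      intro j
      exact jfa_cont_log_abs ((continuous_const.mul hcexp).sub continuous_const)
        (fun θ => hfacne θ j)
    have hInta : ∀ j, IntervalIntegrable (fun θ : ℝ =>
        Real.log (‖(c:ℂ) * Complex.exp ((θ:ℂ) * Complex.I) - a j‖))
        volume 0 (2*π) := fun j => (hconta j).intervalIntegrable _ _
    have hpt : ∀ θ : ℝ,
        Real.log (‖g ((c:ℂ) * Complex.exp ((θ:ℂ) * Complex.I))‖)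
        = (∑ j, Real.log (‖(c:ℂ) * Complex.exp ((θ:ℂ) * Complex.I) - a j‖))
          + Real.log (‖h ((c:ℂ) * Complex.exp ((θ:ℂ) * Complex.I))‖) := by
      intro θ
      rw [hgdef, norm_mul, Real.log_mul, norm_prod, Real.log_prod]
      · intro j _
        exact norm_ne_zero_iff.mpr (hfacne θ j)
      · rw [norm_prod]
        exact Finset.prod_ne_zero_iff.mpr fun j _ => norm_ne_zero_iff.mpr (hfacne θ j)
      · exact norm_ne_zero_iff.mpr (hnez c h1 h2 θ)
    have hsumInt : IntervalIntegrable (fun θ : ℝ =>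
        ∑ j, Real.log (‖(c:ℂ) * Complex.exp ((θ:ℂ) * Complex.I) - a j‖))
        volume 0 (2*π) :=
      (continuous_finset_sum _ (fun j _ => hconta j)).intervalIntegrable _ _
    rw [intervalIntegral.integral_congr (fun θ _ => hpt θ),
      intervalIntegral.integral_add hsumInt (hintH c h1 h2),
      intervalIntegral.integral_finset_sum (fun j _ => hInta j)]
    congr 1
    exact Finset.sum_congr rfl fun j _ => jfa_circle_log c hcpos (a j) (hca j)
  -- FTC along rays for the zero-free factor h
  have key2 : ∀ θ : ℝ,
      (∫ t in r..R, ((deriv h ((t:ℂ) * Complex.exp ((θ:ℂ) * Complex.I)) /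
          h ((t:ℂ) * Complex.exp ((θ:ℂ) * Complex.I))) * Complex.exp ((θ:ℂ) * Complex.I)).re)
      = Real.log (‖h ((R:ℂ) * Complex.exp ((θ:ℂ) * Complex.I))‖)
        - Real.log (‖h ((r:ℂ) * Complex.exp ((θ:ℂ) * Complex.I))‖) := by
    intro θ
    have hderiv : ∀ t ∈ uIcc r R, HasDerivAt
        (fun s : ℝ => Real.log (‖h ((s:ℂ) * Complex.exp ((θ:ℂ) * Complex.I))‖))
        (((deriv h ((t:ℂ) * Complex.exp ((θ:ℂ) * Complex.I)) /
            h ((t:ℂ) * Complex.exp ((θ:ℂ) * Complex.I))) * Complex.exp ((θ:ℂ) * Complex.I)).re)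
        t := by
      intro t ht
      rw [uIcc_of_le hrR.le] at ht
      have hzU := hmem t ht.1 ht.2 θ
      have hd : HasDerivAt h (deriv h ((t:ℂ) * Complex.exp ((θ:ℂ) * Complex.I)))
          ((t:ℂ) * Complex.exp ((θ:ℂ) * Complex.I)) :=
        (hh _ hzU).differentiableAt.hasDerivAt
      have hc : HasDerivAt (fun s : ℝ => (s:ℂ) * Complex.exp ((θ:ℂ) * Complex.I))
          (Complex.exp ((θ:ℂ) * Complex.I)) t := by
        simpa using Complex.ofRealCLM.hasDerivAt.mul_const (Complex.exp ((θ:ℂ) * Complex.I))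
      have hcomp := hd.scomp t hc
      have hlog := jfa_hasDerivAt_log_abs hcomp (hnez t ht.1 ht.2 θ)
      simp only [Function.comp_def] at hlog
      have hre : Complex.exp ((θ:ℂ) * Complex.I) • deriv h ((t:ℂ) * Complex.exp ((θ:ℂ) * Complex.I)) /
            h ((t:ℂ) * Complex.exp ((θ:ℂ) * Complex.I))
          = deriv h ((t:ℂ) * Complex.exp ((θ:ℂ) * Complex.I)) /
            h ((t:ℂ) * Complex.exp ((θ:ℂ) * Complex.I)) * Complex.exp ((θ:ℂ) * Complex.I) := by
        rw [smul_eq_mul]; ring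
      rw [hre] at hlog
      exact hlog
    have hcontt : ContinuousOn (fun t : ℝ =>
        ((deriv h ((t:ℂ) * Complex.exp ((θ:ℂ) * Complex.I)) /
          h ((t:ℂ) * Complex.exp ((θ:ℂ) * Complex.I))) * Complex.exp ((θ:ℂ) * Complex.I)).re)
        (Icc r R) := by
      have hzc : Continuous fun t : ℝ => (t:ℂ) * Complex.exp ((θ:ℂ) * Complex.I) :=
        Complex.continuous_ofReal.mul continuous_const
      have hm : ∀ t ∈ Icc r R, (t:ℂ) * Complex.exp ((θ:ℂ) * Complex.I) ∈ U :=
        fun t ht => hmem t ht.1 ht.2 θ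
      have c1 : ContinuousOn (fun t : ℝ =>
          deriv h ((t:ℂ) * Complex.exp ((θ:ℂ) * Complex.I))) (Icc r R) :=
        hcontd.comp hzc.continuousOn hm
      have c2 : ContinuousOn (fun t : ℝ =>
          h ((t:ℂ) * Complex.exp ((θ:ℂ) * Complex.I))) (Icc r R) :=
        hconth.comp hzc.continuousOn hm
      exact Complex.continuous_re.comp_continuousOn
        ((c1.div c2 (fun t ht => hnez t ht.1 ht.2 θ)).mul continuousOn_const)
    apply intervalIntegral.integral_eq_sub_of_hasDerivAt hderiv
    exact ContinuousOn.intervalIntegrable (by rw [uIcc_of_le hrR.le]; exact hcontt)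
  -- joint continuity for Fubini
  have hψcont : ContinuousOn (fun p : ℝ × ℝ =>
      ((deriv h ((p.1:ℂ) * Complex.exp ((p.2:ℂ) * Complex.I)) /
        h ((p.1:ℂ) * Complex.exp ((p.2:ℂ) * Complex.I))) * Complex.exp ((p.2:ℂ) * Complex.I)).re)
      (Icc r R ×ˢ Icc 0 (2*π)) := by
    have hw2 : Continuous fun p : ℝ × ℝ => (p.1:ℂ) * Complex.exp ((p.2:ℂ) * Complex.I) :=
      (Complex.continuous_ofReal.comp continuous_fst).mul
        (((Complex.continuous_ofReal.comp continuous_snd).mul continuous_const).cexp)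
    have hm2 : ∀ p ∈ Icc r R ×ˢ Icc 0 (2*π),
        (p.1:ℂ) * Complex.exp ((p.2:ℂ) * Complex.I) ∈ U :=
      fun p hp => hmem p.1 hp.1.1 hp.1.2 p.2
    have c1 := hcontd.comp hw2.continuousOn hm2
    have c2 := hconth.comp hw2.continuousOn hm2
    have c3 : Continuous fun p : ℝ × ℝ => Complex.exp ((p.2:ℂ) * Complex.I) :=
      ((Complex.continuous_ofReal.comp continuous_snd).mul continuous_const).cexp
    exact Complex.continuous_re.comp_continuousOn
      ((c1.div c2 (fun p hp => hnez p.1 hp.1.1 hp.1.2 p.2)).mul c3.continuousOn)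
  have hFub : Integrable (Function.uncurry fun t θ : ℝ =>
      ((deriv h ((t:ℂ) * Complex.exp ((θ:ℂ) * Complex.I)) /
        h ((t:ℂ) * Complex.exp ((θ:ℂ) * Complex.I))) * Complex.exp ((θ:ℂ) * Complex.I)).re)
      ((volume.restrict (Ioc r R)).prod (volume.restrict (Ioc 0 (2*π)))) := by
    rw [Measure.prod_restrict]
    exact (hψcont.integrableOn_compact (isCompact_Icc.prod isCompact_Icc)).mono_set
      (Set.prod_mono Set.Ioc_subset_Icc_self Set.Ioc_subset_Icc_self)
  have hswap : (∫ t in r..R, ∫ θ in (0:ℝ)..(2*π),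
        ((deriv h ((t:ℂ) * Complex.exp ((θ:ℂ) * Complex.I)) /
          h ((t:ℂ) * Complex.exp ((θ:ℂ) * Complex.I))) * Complex.exp ((θ:ℂ) * Complex.I)).re)
      = ∫ θ in (0:ℝ)..(2*π), ∫ t in r..R,
        ((deriv h ((t:ℂ) * Complex.exp ((θ:ℂ) * Complex.I)) /
          h ((t:ℂ) * Complex.exp ((θ:ℂ) * Complex.I))) * Complex.exp ((θ:ℂ) * Complex.I)).re := by
    simp only [intervalIntegral.integral_of_le hrR.le, intervalIntegral.integral_of_le h2π.le]
    exact MeasureTheory.integral_integral_swap hFub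
  have hHdiff : (∫ θ in (0:ℝ)..(2*π), ∫ t in r..R,
        ((deriv h ((t:ℂ) * Complex.exp ((θ:ℂ) * Complex.I)) /
          h ((t:ℂ) * Complex.exp ((θ:ℂ) * Complex.I))) * Complex.exp ((θ:ℂ) * Complex.I)).re)
      = (∫ θ in (0:ℝ)..(2*π),
          Real.log (‖h ((R:ℂ) * Complex.exp ((θ:ℂ) * Complex.I))‖))
        - ∫ θ in (0:ℝ)..(2*π),
          Real.log (‖h ((r:ℂ) * Complex.exp ((θ:ℂ) * Complex.I))‖) := by
    rw [intervalIntegral.integral_congr (fun θ _ => key2 θ),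
      intervalIntegral.integral_sub (hintH R hrR.le le_rfl) (hintH r le_rfl hrR.le)]
  have hRHS : (∫ t in r..R, (1 / t) *
        ((1 / (2 * π)) *
          (∫ θ in (0:ℝ)..(2 * π),
            (deriv h ((t : ℂ) * Complex.exp ((θ : ℂ) * Complex.I)) /
                h ((t : ℂ) * Complex.exp ((θ : ℂ) * Complex.I))) *
              ((t : ℂ) * Complex.exp ((θ : ℂ) * Complex.I))).re))
      = (1/(2*π)) * ∫ t in r..R, ∫ θ in (0:ℝ)..(2*π),
        ((deriv h ((t:ℂ) * Complex.exp ((θ:ℂ) * Complex.I)) /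
          h ((t:ℂ) * Complex.exp ((θ:ℂ) * Complex.I))) * Complex.exp ((θ:ℂ) * Complex.I)).re := by
    rw [← intervalIntegral.integral_const_mul]
    apply intervalIntegral.integral_congr
    intro t ht
    dsimp only
    rw [uIcc_of_le hrR.le] at ht
    have htpos : 0 < t := lt_of_lt_of_le hr ht.1
    have hzc : Continuous fun θ : ℝ => (t:ℂ) * Complex.exp ((θ:ℂ) * Complex.I) :=
      continuous_const.mul hcexp
    have c1 : Continuous fun θ : ℝ => deriv h ((t:ℂ) * Complex.exp ((θ:ℂ) * Complex.I)) :=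
      hcontd.comp_continuous hzc (fun θ => hmem t ht.1 ht.2 θ)
    have c2 : Continuous fun θ : ℝ => h ((t:ℂ) * Complex.exp ((θ:ℂ) * Complex.I)) :=
      hconth.comp_continuous hzc (fun θ => hmem t ht.1 ht.2 θ)
    have hcont_c : Continuous fun θ : ℝ =>
        (deriv h ((t:ℂ) * Complex.exp ((θ:ℂ) * Complex.I)) /
          h ((t:ℂ) * Complex.exp ((θ:ℂ) * Complex.I))) *
            ((t:ℂ) * Complex.exp ((θ:ℂ) * Complex.I)) :=
      (c1.div c2 (fun θ => hnez t ht.1 ht.2 θ)).mul hzc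
    have hint : IntervalIntegrable (fun θ : ℝ =>
        (deriv h ((t:ℂ) * Complex.exp ((θ:ℂ) * Complex.I)) /
          h ((t:ℂ) * Complex.exp ((θ:ℂ) * Complex.I))) *
            ((t:ℂ) * Complex.exp ((θ:ℂ) * Complex.I))) volume 0 (2*π) :=
      hcont_c.intervalIntegrable _ _
    have this2 : (∫ θ in (0:ℝ)..(2*π),
          (deriv h ((t:ℂ) * Complex.exp ((θ:ℂ) * Complex.I)) /
            h ((t:ℂ) * Complex.exp ((θ:ℂ) * Complex.I))) *
              ((t:ℂ) * Complex.exp ((θ:ℂ) * Complex.I))).re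
        = ∫ θ in (0:ℝ)..(2*π),
          ((deriv h ((t:ℂ) * Complex.exp ((θ:ℂ) * Complex.I)) /
            h ((t:ℂ) * Complex.exp ((θ:ℂ) * Complex.I))) *
              ((t:ℂ) * Complex.exp ((θ:ℂ) * Complex.I))).re :=
      (Complex.reCLM.intervalIntegral_comp_comm hint).symm
    rw [this2]
    have hinner : (1/t) * (∫ θ in (0:ℝ)..(2*π),
        ((deriv h ((t:ℂ) * Complex.exp ((θ:ℂ) * Complex.I)) /
          h ((t:ℂ) * Complex.exp ((θ:ℂ) * Complex.I))) *
            ((t:ℂ) * Complex.exp ((θ:ℂ) * Complex.I))).re)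
        = ∫ θ in (0:ℝ)..(2*π),
          ((deriv h ((t:ℂ) * Complex.exp ((θ:ℂ) * Complex.I)) /
            h ((t:ℂ) * Complex.exp ((θ:ℂ) * Complex.I))) * Complex.exp ((θ:ℂ) * Complex.I)).re := by
      rw [← intervalIntegral.integral_const_mul]
      apply intervalIntegral.integral_congr
      intro θ _
      dsimp only
      have hzz : (deriv h ((t:ℂ) * Complex.exp ((θ:ℂ) * Complex.I)) /
            h ((t:ℂ) * Complex.exp ((θ:ℂ) * Complex.I))) *
              ((t:ℂ) * Complex.exp ((θ:ℂ) * Complex.I))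
          = (t:ℂ) * ((deriv h ((t:ℂ) * Complex.exp ((θ:ℂ) * Complex.I)) /
            h ((t:ℂ) * Complex.exp ((θ:ℂ) * Complex.I))) * Complex.exp ((θ:ℂ) * Complex.I)) := by
        ring
      rw [hzz]
      simp only [Complex.mul_re, Complex.ofReal_re, Complex.ofReal_im, zero_mul, sub_zero]
      field_simp
    rw [← hinner]
    ring
  -- assemble
  rw [split R hrR.le le_rfl (fun j => (ha j).2.ne),
    split r le_rfl hrR.le (fun j => (ha j).1.ne'), hRHS, hswap, hHdiff]
  have e1 : (∑ j : Fin m, 2*π*Real.log (max R (‖a j‖)))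
      = 2*π * ∑ j : Fin m, Real.log R := by
    rw [Finset.mul_sum]
    exact Finset.sum_congr rfl fun j _ => by rw [max_eq_left (ha j).2.le]
  have e2 : (∑ j : Fin m, 2*π*Real.log (max r (‖a j‖)))
      = 2*π * ∑ j : Fin m, Real.log (‖a j‖) := by
    rw [Finset.mul_sum]
    exact Finset.sum_congr rfl fun j _ => by rw [max_eq_right (ha j).1.le]
  have e3 : (∑ j : Fin m, Real.log (R / ‖a j‖))
      = (∑ j : Fin m, Real.log R) - ∑ j : Fin m, Real.log (‖a j‖) := by
    rw [← Finset.sum_sub_distrib]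
    exact Finset.sum_congr rfl fun j _ => Real.log_div hRpos.ne'
      (ne_of_gt (lt_trans hr (ha j).1))
  rw [e1, e2, e3]
  have hc : (1/(2*π)) * (2*π) = 1 := by field_simp
  linear_combination (∑ j : Fin m, Real.log R - ∑ j : Fin m, Real.log (‖a j‖)) * hc
end

section
/- Log-Hölder continuity of measures with nonnegative logarithmic potential: let μ be a finite positive Borel measure on ℂ whose support is contained in the closed ball of radius c ≥ 0 centered at 0, and assume that for every z ∈ ℂ the function z' ↦ log|z − z'| is μ-integrable with ∫_ℂ log|z − z'| dμ(z') ≥ 0. Then for every z ∈ ℂ and every radius ρ with 0 < ρ < 1, one has μ( B(z,ρ) ) · log(1/ρ) ≤ μ(ℂ) · log(1 + c + |z|), where B(z,ρ) is the open ball of radius ρ centered at z. -/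
/-!
Split the potential `∫ log‖w - z'‖ dμ(z')` over a set `S` of points at distance at most `r`
from `w` and its complement: the first part is at most `μ(S) log r`, the second at most
`μ(ℂ) log(1 + c + ‖w‖)` because the support lies in `closedBall 0 c`. With `S = {z}` and `w`
at distance `t` from `z`, nonnegativity of the potential forces `μ{z} log t ≥ -C` for all small
`t`, so `μ` has no atoms (integrability alone does not exclude them, since `Real.log 0 = 0`).
With `w = z` and `S` the punctured ball `B(z, ρ) \ {z}`, which then has the mass of `B(z, ρ)`,
it gives the theorem.
-/

open MeasureTheory Metric

section LogPotential

variable {μ : Measure ℂ} {c : ℝ}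

lemma log_norm_sub_le_of_norm_le {w z' : ℂ} (hz' : ‖z'‖ ≤ c) :
    Real.log ‖w - z'‖ ≤ Real.log (1 + c + ‖w‖) := by
  have hbound : ‖w - z'‖ ≤ 1 + c + ‖w‖ := by linarith [norm_sub_le w z']
  rcases (norm_nonneg (w - z')).eq_or_lt with h0 | h0
  · rw [← h0, Real.log_zero]
    exact Real.log_nonneg (by linarith [norm_nonneg z', norm_nonneg w])
  · exact Real.log_le_log h0 hbound

lemma ae_log_norm_sub_le (hsupp : μ (closedBall (0 : ℂ) c)ᶜ = 0) (w : ℂ) :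
    ∀ᵐ z' ∂μ, Real.log ‖w - z'‖ ≤ Real.log (1 + c + ‖w‖) := by
  filter_upwards [measure_eq_zero_iff_ae_notMem.mp hsupp] with z' hz'
  exact log_norm_sub_le_of_norm_le (mem_closedBall_zero_iff.mp (not_not.mp hz'))

lemma setIntegral_log_norm_sub_le_of_subset_closedBall [IsFiniteMeasure μ] {w : ℂ} {S : Set ℂ}
    {r : ℝ} (hint : Integrable (fun z' ↦ Real.log ‖w - z'‖) μ) (hS : MeasurableSet S)
    (hSr : S ⊆ closedBall w r) (hwS : w ∉ S) :
    ∫ z' in S, Real.log ‖w - z'‖ ∂μ ≤ μ.real S * Real.log r := by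
  have hbound : ∀ z' ∈ S, Real.log ‖w - z'‖ ≤ Real.log r := fun z' hz' ↦
    Real.log_le_log (norm_pos_iff.mpr (sub_ne_zero.mpr fun h ↦ hwS (h ▸ hz')))
      (by simpa [dist_comm, dist_eq_norm] using hSr hz')
  calc ∫ z' in S, Real.log ‖w - z'‖ ∂μ ≤ ∫ _ in S, Real.log r ∂μ :=
        setIntegral_mono_on hint.integrableOn (integrable_const _) hS hbound
    _ = μ.real S * Real.log r := by rw [setIntegral_const, smul_eq_mul]

lemma setIntegral_log_norm_sub_le [IsFiniteMeasure μ] (hc : 0 ≤ c)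
    (hsupp : μ (closedBall (0 : ℂ) c)ᶜ = 0) {w : ℂ}
    (hint : Integrable (fun z' ↦ Real.log ‖w - z'‖) μ) (S : Set ℂ) :
    ∫ z' in S, Real.log ‖w - z'‖ ∂μ ≤ μ.real Set.univ * Real.log (1 + c + ‖w‖) := by
  have hlog : 0 ≤ Real.log (1 + c + ‖w‖) := Real.log_nonneg (by linarith [norm_nonneg w])
  calc ∫ z' in S, Real.log ‖w - z'‖ ∂μ ≤ ∫ _ in S, Real.log (1 + c + ‖w‖) ∂μ :=
        integral_mono_ae hint.integrableOn (integrable_const _)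
          (ae_restrict_of_ae (ae_log_norm_sub_le hsupp w))
    _ = μ.real S * Real.log (1 + c + ‖w‖) := by rw [setIntegral_const, smul_eq_mul]
    _ ≤ μ.real Set.univ * Real.log (1 + c + ‖w‖) :=
        mul_le_mul_of_nonneg_right (measureReal_mono (Set.subset_univ S)) hlog

lemma integral_log_norm_sub_le [IsFiniteMeasure μ] (hc : 0 ≤ c)
    (hsupp : μ (closedBall (0 : ℂ) c)ᶜ = 0) {w : ℂ} {S : Set ℂ} {r : ℝ}
    (hint : Integrable (fun z' ↦ Real.log ‖w - z'‖) μ) (hS : MeasurableSet S)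
    (hSr : S ⊆ closedBall w r) (hwS : w ∉ S) :
    ∫ z', Real.log ‖w - z'‖ ∂μ
      ≤ μ.real S * Real.log r + μ.real Set.univ * Real.log (1 + c + ‖w‖) := by
  rw [← integral_add_compl hS hint]
  exact add_le_add (setIntegral_log_norm_sub_le_of_subset_closedBall hint hS hSr hwS)
    (setIntegral_log_norm_sub_le hc hsupp hint Sᶜ)

lemma measure_singleton_eq_zero_of_nonneg_potential [IsFiniteMeasure μ] (hc : 0 ≤ c)
    (hsupp : μ (closedBall (0 : ℂ) c)ᶜ = 0)
    (hint : ∀ w : ℂ, Integrable (fun z' ↦ Real.log ‖w - z'‖) μ)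
    (hpos : ∀ w : ℂ, 0 ≤ ∫ z', Real.log ‖w - z'‖ ∂μ) (z : ℂ) :
    μ {z} = 0 := by
  set M := μ.real Set.univ * Real.log (2 + c + ‖z‖)
  have hsmall : ∀ t : ℝ, 0 < t → t ≤ 1 → 0 ≤ μ.real {z} * Real.log t + M := by
    intro t ht ht1
    have hnorm : ‖z + t - z‖ = t := by simp [abs_of_pos ht]
    have hmem : z ∈ closedBall (z + t) t := by
      rw [mem_closedBall, dist_comm, dist_eq_norm, hnorm]
    have hne : z + t ∉ ({z} : Set ℂ) := fun h ↦ by simp_all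
    have hlog : Real.log (1 + c + ‖z + t‖) ≤ Real.log (2 + c + ‖z‖) := by
      have : ‖z + t‖ ≤ ‖z‖ + t := by simpa [abs_of_pos ht] using norm_add_le z (t : ℂ)
      exact Real.log_le_log (by positivity) (by linarith)
    calc 0 ≤ ∫ z', Real.log ‖z + t - z'‖ ∂μ := hpos _
      _ ≤ μ.real {z} * Real.log t + μ.real Set.univ * Real.log (1 + c + ‖z + t‖) :=
          integral_log_norm_sub_le hc hsupp (hint _) (measurableSet_singleton z)
            (Set.singleton_subset_iff.mpr hmem) hne
      _ ≤ μ.real {z} * Real.log t + M :=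
          add_le_add le_rfl (mul_le_mul_of_nonneg_left hlog measureReal_nonneg)
  by_contra hatom
  have ha : 0 < μ.real {z} := ENNReal.toReal_pos hatom (measure_ne_top μ _)
  have hM : 0 ≤ M := mul_nonneg measureReal_nonneg
    (Real.log_nonneg (by linarith [norm_nonneg z]))
  -- at `t = exp (-(M + 1) / μ{z})` the atom contributes `-(M + 1)`
  have := hsmall (Real.exp (-(M + 1) / μ.real {z})) (Real.exp_pos _)
    (Real.exp_le_one_iff.mpr (div_nonpos_of_nonpos_of_nonneg (by linarith) ha.le))
  rw [Real.log_exp, mul_div_cancel₀ _ ha.ne'] at this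
  linarith

end LogPotential

/-- Log-Hölder continuity of measures with nonnegative logarithmic potential: if `μ` is a
finite positive Borel measure on `ℂ` supported in the closed ball of radius `c ≥ 0` around
`0` whose logarithmic potential `∫ log|z − z'| dμ(z')` is defined and nonnegative at every
`z`, then for every `z` and every `0 < ρ < 1`,
`μ(B(z,ρ)) · log(1/ρ) ≤ μ(ℂ) · log(1 + c + |z|)`. -/
theorem logHolder_of_nonneg_potential (μ : Measure ℂ) [IsFiniteMeasure μ]
    (c : ℝ) (hc : 0 ≤ c) (hsupp : μ (Metric.closedBall (0 : ℂ) c)ᶜ = 0)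
    (hint : ∀ z : ℂ, Integrable (fun z' : ℂ => Real.log (‖z - z'‖)) μ)
    (hpos : ∀ z : ℂ, 0 ≤ ∫ z' : ℂ, Real.log (‖z - z'‖) ∂μ) :
    ∀ z : ℂ, ∀ ρ : ℝ, 0 < ρ → ρ < 1 →
      (μ (Metric.ball z ρ)).toReal * Real.log (1 / ρ)
        ≤ (μ Set.univ).toReal * Real.log (1 + c + ‖z‖) := by
  intro z ρ _ _
  have hatom := measure_singleton_eq_zero_of_nonneg_potential hc hsupp hint hpos z
  have hpunctured : μ.real (ball z ρ \ {z}) = μ.real (ball z ρ) :=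
    congrArg ENNReal.toReal (measure_sdiff_null hatom)
  have := (hpos z).trans <| integral_log_norm_sub_le (r := ρ) hc hsupp (hint z)
    (isOpen_ball.measurableSet.diff (measurableSet_singleton z))
    (Set.sdiff_subset.trans ball_subset_closedBall) (fun h ↦ h.2 rfl)
  rw [hpunctured] at this
  rw [one_div, Real.log_inv]
  simp only [measureReal_def] at this
  linarith
end

section
/- Lower bound for harmonic functions via the distortion theorem: let 1 < r < r', let F be a complex-valued function analytic on the open disc { z : |z| < r' } with F(0) = 0, let h(z) = Re F(z), and assume h(z) < C for all z with |z| < r (for some real constant C). Then for every z with |z| = 1, h(z) ≥ −C · (1 + (1 + r⁻¹)/(1 − r⁻¹)³). -/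
/-!
The Borel–Carathéodory theorem (the Schwarz lemma applied to `F / (2C - F)`, which maps the
disc of radius `r` into the unit disc) gives `‖F z‖ ≤ 2C / (r - 1)` on the unit circle. With
`s = r⁻¹ ∈ (0, 1)` this constant is `2s / (1 - s) ≤ (1 + s) / (1 - s) ≤ (1 + s) / (1 - s)³`,
so it is dominated by the constant the distortion theorem produces.
-/

open Metric

theorem two_div_sub_one_le_distortion_bound {r : ℝ} (hr : 1 < r) :
    2 / (r - 1) ≤ 1 + (1 + r⁻¹) / (1 - r⁻¹) ^ 3 := by
  have hs0 : 0 < r⁻¹ := by positivity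
  have hs1 : r⁻¹ < 1 := inv_lt_one_of_one_lt₀ hr
  calc 2 / (r - 1) = 2 * r⁻¹ / (1 - r⁻¹) := by field_simp
    _ ≤ (1 + r⁻¹) / (1 - r⁻¹) := by gcongr; linarith
    _ ≤ (1 + r⁻¹) / (1 - r⁻¹) ^ 3 := by
      gcongr
      exact pow_le_of_le_one (by linarith) (by linarith) (by norm_num)
    _ ≤ 1 + (1 + r⁻¹) / (1 - r⁻¹) ^ 3 := le_add_of_nonneg_left zero_le_one

/-- Lower bound for harmonic functions via the distortion theorem: let `1 < r < r'`, let
`F` be analytic on the open disc of radius `r'` with `F(0) = 0`, let `h = Re F`, and assume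
`h < C` on the open disc of radius `r`. Then `h(z) ≥ −C·(1 + (1 + r⁻¹)/(1 − r⁻¹)³)` for
every `|z| = 1`. -/
theorem harmonic_lower_bound_distortion (r r' : ℝ) (h1r : 1 < r) (hrr' : r < r')
    (F : ℂ → ℂ) (hF : DifferentiableOn ℂ F (Metric.ball (0 : ℂ) r'))
    (hF0 : F 0 = 0) (C : ℝ)
    (hlt : ∀ z : ℂ, ‖z‖ < r → (F z).re < C) :
    ∀ z : ℂ, ‖z‖ = 1 →
      (F z).re ≥ -C * (1 + (1 + r⁻¹) / (1 - r⁻¹) ^ 3) := by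
  intro z hz
  have hC : 0 < C := by simpa [hF0] using hlt 0 (by simpa using one_pos.trans h1r)
  have hz_mem : z ∈ ball (0 : ℂ) r := by rwa [mem_ball_zero_iff, hz]
  have hFz : ‖F z‖ ≤ C * (2 / (r - 1)) := by
    have := Complex.borelCaratheodory_zero hC (hF.mono (ball_subset_ball hrr'.le))
      (fun w hw ↦ (hlt w (mem_ball_zero_iff.mp hw)).le) (by linarith) hz_mem hF0
    rwa [hz, mul_one, mul_div_assoc, mul_div_left_comm] at this
  calc (F z).re ≥ -‖F z‖ := by linarith [neg_abs_le (F z).re, Complex.abs_re_le_norm (F z)]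
    _ ≥ -(C * (1 + (1 + r⁻¹) / (1 - r⁻¹) ^ 3)) :=
      neg_le_neg (hFz.trans (mul_le_mul_of_nonneg_left
        (two_div_sub_one_le_distortion_bound h1r) hC.le))
    _ = -C * (1 + (1 + r⁻¹) / (1 - r⁻¹) ^ 3) := (neg_mul _ _).symm
end
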